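/- arXiv:2411.02984 — 2 statements merged into one kernel-verified Lean document; each statement's English description precedes it below -/
import Mathlib

section
/- Let 𝔽_q ⊂ 𝔽_{q²} and δ ∈ 𝔽_{q²} with 𝔽_{q²} = 𝔽_q ⊕ 𝔽_q δ. Set u = [[1, δ],[0,1]] ∈ GL₂(𝔽_{q²}) and let B̄ be the lower-triangular Borel of GL₂(𝔽_{q²}). Then GL₂(𝔽_q) ∩ u B̄ u⁻¹ = T_δ, where T_δ = { [[a, cδ²],[c, a]] : (a,c) ∈ 𝔽_q² ∖ {(0,0)}, det ≠ 0 } is the non-split torus of GL₂(𝔽_q). -/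
/-- For the quadratic extension `𝔽_q ⊂ 𝔽_{q²}` with `𝔽_{q²} = 𝔽_q ⊕ 𝔽_q δ`
and `u = [[1,δ],[0,1]]`, the intersection `GL₂(𝔽_q) ∩ u B̄ u⁻¹` (with `B̄` the lower-triangular
Borel of `GL₂(𝔽_{q²})`) equals the non-split torus `T_δ = {[[a, cδ²],[c, a]] : (a,c) ≠ (0,0)}`. -/
theorem stmt_7 (F K : Type) [Field F] [Field K] [Algebra F K] [Fintype F] [Fintype K]
    (δ : K)
    (hspan : ∀ x : K, ∃ a b : F, x = algebraMap F K a + algebraMap F K b * δ)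
    (hind : ∀ a b : F, algebraMap F K a + algebraMap F K b * δ = 0 → a = 0 ∧ b = 0)
    (s : F) (hs : algebraMap F K s = δ * δ) :
    {g : Matrix.GeneralLinearGroup (Fin 2) K |
        (∀ i j : Fin 2, ∃ x : F, (g : Matrix (Fin 2) (Fin 2) K) i j = algebraMap F K x) ∧
        (!![1, -δ; 0, 1] * (g : Matrix (Fin 2) (Fin 2) K) * !![1, δ; 0, 1]) 0 1 = 0}
      = {g : Matrix.GeneralLinearGroup (Fin 2) K |
          ∃ a c : F, ¬(a = 0 ∧ c = 0) ∧
            (g : Matrix (Fin 2) (Fin 2) K)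
              = !![algebraMap F K a, algebraMap F K (c * s);
                   algebraMap F K c, algebraMap F K a]} := by
  ext g
  have hdet : (g : Matrix (Fin 2) (Fin 2) K).det ≠ 0 :=
    ((Matrix.isUnit_iff_isUnit_det _).mp g.isUnit).ne_zero
  simp only [Set.mem_setOf_eq]
  constructor
  · rintro ⟨hF, hcond⟩
    obtain ⟨a, ha⟩ := hF 0 0
    obtain ⟨b, hb⟩ := hF 0 1
    obtain ⟨c, hc⟩ := hF 1 0
    obtain ⟨d, hd⟩ := hF 1 1
    have hcond' : (g : Matrix (Fin 2) (Fin 2) K) 0 1 - δ * δ * (g : Matrix (Fin 2) (Fin 2) K) 1 0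
        + ((g : Matrix (Fin 2) (Fin 2) K) 0 0 - (g : Matrix (Fin 2) (Fin 2) K) 1 1) * δ = 0 := by
      rw [← hcond]
      simp [Matrix.mul_apply, Matrix.vecMul, dotProduct, Fin.sum_univ_succ]
      ring
    rw [ha, hb, hc, hd, ← hs] at hcond'
    have key : algebraMap F K (b - s * c) + algebraMap F K (a - d) * δ = 0 := by
      rw [map_sub, map_sub, map_mul]
      linear_combination hcond'
    obtain ⟨h1, h2⟩ := hind _ _ key
    have hb' : b = s * c := sub_eq_zero.mp h1
    have had : a = d := sub_eq_zero.mp h2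
    refine ⟨a, c, ?_, ?_⟩
    · rintro ⟨rfl, rfl⟩
      apply hdet
      rw [Matrix.det_fin_two, ha, hb, hc, hd, hb', ← had]
      simp
    · ext i j
      fin_cases i <;> fin_cases j
      · simpa using ha
      · simpa [hb', mul_comm] using hb
      · simpa using hc
      · simpa [← had] using hd
  · rintro ⟨a, c, hne, hg⟩
    refine ⟨?_, ?_⟩
    · intro i j
      fin_cases i <;> fin_cases j
      · exact ⟨a, by rw [hg]; simp⟩
      · exact ⟨c * s, by rw [hg]; simp⟩
      · exact ⟨c, by rw [hg]; simp⟩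
      · exact ⟨a, by rw [hg]; simp⟩
    · rw [hg]
      simp [Matrix.mul_apply, Fin.sum_univ_succ, map_mul, hs]
      ring
end

section
/- Let 𝔽_q ⊂ 𝔽_{q²} be a quadratic extension of finite fields. The image of GL₂(𝔽_q) ∩ u B̄(𝔽_{q²}) u⁻¹ in GL₂(𝔽_q), where u = [[1,δ],[0,1]] with 𝔽_{q²} = 𝔽_q ⊕ 𝔽_q δ and B̄ the lower-triangular Borel, is the non-split torus of order q² − 1; hence its index in GL₂(𝔽_q) equals q(q−1)·(q+1)·(q−1)/(q²−1) = q² − q. -/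
/-- For the quadratic extension `𝔽_q ⊂ 𝔽_{q²}` with
`𝔽_{q²} = 𝔽_q ⊕ 𝔽_q δ`, `u = [[1,δ],[0,1]]` and `B̄` the lower-triangular Borel of
`GL₂(𝔽_{q²})`, the image of `GL₂(𝔽_q) ∩ u B̄ u⁻¹` in `GL₂(𝔽_q)` is the non-split torus of
order `q² − 1`; hence its index in `GL₂(𝔽_q)` equals `q² − q`. -/
theorem stmt_19 (F K : Type) [Field F] [Field K] [Algebra F K] [Fintype F] [Fintype K]
    (δ : K)
    (hspan : ∀ x : K, ∃ a b : F, x = algebraMap F K a + algebraMap F K b * δ)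
    (hind : ∀ a b : F, algebraMap F K a + algebraMap F K b * δ = 0 → a = 0 ∧ b = 0) :
    Nat.card {g : Matrix.GeneralLinearGroup (Fin 2) F //
        (!![1, -δ; 0, 1] * ((g : Matrix (Fin 2) (Fin 2) F).map (algebraMap F K)) *
            !![1, δ; 0, 1]) 0 1 = 0}
      = Fintype.card F ^ 2 - 1
    ∧ (Fintype.card F ^ 2 - Fintype.card F) * (Fintype.card F ^ 2 - 1)
        = Nat.card (Matrix.GeneralLinearGroup (Fin 2) F) := by
  classical
  constructor
  · -- Part 1: the count of the torus
    set φ := algebraMap F K with hφ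
    obtain ⟨s, t, hst⟩ := hspan (δ * δ)
    -- entry formula
    have entry : ∀ g : Matrix (Fin 2) (Fin 2) F,
        (!![1, -δ; 0, 1] * (g.map φ) * !![1, δ; 0, 1]) 0 1
          = φ (g 0 1 - s * g 1 0) + φ (g 0 0 - g 1 1 - t * g 1 0) * δ := by
      intro g
      simp [Matrix.mul_apply, Matrix.vecMul, dotProduct, Fin.sum_univ_two]
      linear_combination (-(φ (g 1 0))) * hst
    -- irreducibility: the "norm form" has no nontrivial zero
    have irr : ∀ a c : F, a * a - t * a * c - s * (c * c) = 0 → a = 0 ∧ c = 0 := by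
      intro a c h
      have key : (φ a + φ (-c) * δ) * (φ (a - t * c) + φ c * δ) = 0 := by
        have h0 : φ (a * a - t * a * c - s * (c * c)) = 0 := by rw [h, map_zero]
        push_cast [map_sub, map_mul, map_neg] at h0 ⊢
        linear_combination h0 + (- (φ c * φ c)) * hst
      rcases mul_eq_zero.mp key with h1 | h1
      · obtain ⟨ha, hc⟩ := hind _ _ h1
        exact ⟨ha, by simpa using hc⟩
      · obtain ⟨ha, hc⟩ := hind _ _ h1
        subst hc
        simp only [mul_zero, sub_zero] at ha
        exact ⟨ha, rfl⟩
    -- the condition in terms of entries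
    have cond : ∀ g : Matrix (Fin 2) (Fin 2) F,
        (!![1, -δ; 0, 1] * (g.map φ) * !![1, δ; 0, 1]) 0 1 = 0
          ↔ g 0 1 = s * g 1 0 ∧ g 1 1 = g 0 0 - t * g 1 0 := by
      intro g
      rw [entry g]
      constructor
      · intro h
        obtain ⟨h1, h2⟩ := hind _ _ h
        exact ⟨by linear_combination h1, by linear_combination -h2⟩
      · rintro ⟨h1, h2⟩
        have e1 : g 0 1 - s * g 1 0 = 0 := by rw [h1]; ring
        have e2 : g 0 0 - g 1 1 - t * g 1 0 = 0 := by rw [h2]; ring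
        rw [e1, e2, map_zero, zero_mul, add_zero]
    -- the first column of such a `g` is nonzero
    have hne : ∀ g : {g : Matrix.GeneralLinearGroup (Fin 2) F //
        (!![1, -δ; 0, 1] * ((g : Matrix (Fin 2) (Fin 2) F).map φ) *
            !![1, δ; 0, 1]) 0 1 = 0},
        (((g : Matrix.GeneralLinearGroup (Fin 2) F) : Matrix (Fin 2) (Fin 2) F) 0 0,
          ((g : Matrix.GeneralLinearGroup (Fin 2) F) : Matrix (Fin 2) (Fin 2) F) 1 0)
          ≠ (0 : F × F) := by
      intro g hz
      obtain ⟨h1, h2⟩ := (cond _).mp g.2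
      simp only [Prod.mk_eq_zero] at hz
      have hdet := Matrix.isUnits_det_units (g : Matrix.GeneralLinearGroup (Fin 2) F)
      rw [Matrix.det_fin_two, h1, h2, hz.1, hz.2] at hdet
      simp at hdet
    -- bijection with nonzero pairs
    have hbij : Nat.card {g : Matrix.GeneralLinearGroup (Fin 2) F //
        (!![1, -δ; 0, 1] * ((g : Matrix (Fin 2) (Fin 2) F).map φ) *
            !![1, δ; 0, 1]) 0 1 = 0} = Nat.card {p : F × F // p ≠ 0} := by
      refine Nat.card_eq_of_bijective (fun g => ⟨_, hne g⟩) ⟨?_, ?_⟩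
      · intro g₁ g₂ h
        simp only [Subtype.mk_eq_mk, Prod.mk.injEq] at h
        obtain ⟨h1, h2⟩ := (cond _).mp g₁.2
        obtain ⟨h1', h2'⟩ := (cond _).mp g₂.2
        apply Subtype.ext
        apply Units.ext
        rw [Matrix.eta_fin_two ((g₁ : Matrix.GeneralLinearGroup (Fin 2) F) :
              Matrix (Fin 2) (Fin 2) F),
            Matrix.eta_fin_two ((g₂ : Matrix.GeneralLinearGroup (Fin 2) F) :
              Matrix (Fin 2) (Fin 2) F), h1, h2, h1', h2', h.1, h.2]
      · rintro ⟨⟨a, c⟩, hp⟩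
        have hdet : (!![a, s * c; c, a - t * c]).det ≠ 0 := by
          rw [Matrix.det_fin_two_of]
          intro h
          apply hp
          obtain ⟨ha, hc⟩ := irr a c (by linear_combination h)
          simp [ha, hc]
        have hu : IsUnit (!![a, s * c; c, a - t * c]) :=
          (Matrix.isUnit_iff_isUnit_det _).mpr (isUnit_iff_ne_zero.mpr hdet)
        have hcoe : ((hu.unit : (Matrix (Fin 2) (Fin 2) F)ˣ) : Matrix (Fin 2) (Fin 2) F)
            = !![a, s * c; c, a - t * c] := hu.unit_spec
        refine ⟨⟨hu.unit, ?_⟩, ?_⟩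
        · rw [show ((hu.unit : Matrix.GeneralLinearGroup (Fin 2) F) :
            Matrix (Fin 2) (Fin 2) F) = !![a, s * c; c, a - t * c] from hcoe, cond]
          constructor <;> simp
        · apply Subtype.ext
          simp only [hcoe]
          simp
    rw [hbij, Nat.card_eq_fintype_card]
    rw [Fintype.card_subtype_compl (fun p : F × F => p = 0),
      Fintype.card_subtype_eq (0 : F × F), Fintype.card_prod, sq]
  · -- Part 2: the order of GL₂
    rw [Matrix.card_GL_field, Fin.prod_univ_two]
    simp only [Fin.val_zero, Fin.val_one, pow_zero, pow_one]
    exact Nat.mul_comm _ _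
end
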